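/- Let b : ℤ → ℚ with b(n) ≠ 0 for all n satisfy the lens recurrence b(n+1) = α·b(n) − b(n−1) + β for all n ∈ ℤ, together with the compatibility condition at some index, and let f : ℤ → ℚ with f(n) ≠ 0 for all n satisfy b(n) = f(n−1)·f(n) for all n. Then f satisfies the quadratic four-term recurrence: for all n ∈ ℤ, f(n+3)·f(n) − f(n+1)·f(n+2) = −β. -/

import Mathlib

/-!
The compatibility defect `b n ^ 2 + b (n + 1) ^ 2 - α b n b (n + 1) - β (b n + b (n + 1))` is
a conserved quantity of the lens recurrence, so compatibility at one index gives it at all of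
them. Eliminating `b (n + 2)` between the recurrence and compatibility at `n` yields
`b n * b (n + 2) = b (n + 1) * (b (n + 1) - β)`; substituting `b = f (· - 1) * f` and cancelling
`f (n + 1) * f (n + 2)` gives the four-term recurrence for `f`.
-/

section LensRecurrence

variable {R : Type*} [CommRing R] {b : ℤ → R} {α β : R}

def lensDefect (b : ℤ → R) (α β : R) (n : ℤ) : R :=
  b n ^ 2 + b (n + 1) ^ 2 - α * b n * b (n + 1) - β * (b n + b (n + 1))

lemma lensDefect_succ (hrec : ∀ n : ℤ, b (n + 1) = α * b n - b (n - 1) + β) (n : ℤ) :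
    lensDefect b α β (n + 1) = lensDefect b α β n := by
  have e := hrec (n + 1)
  rw [add_sub_cancel_right] at e
  unfold lensDefect
  linear_combination (b (n + 1 + 1) - b n) * e

lemma lensDefect_eq (hrec : ∀ n : ℤ, b (n + 1) = α * b n - b (n - 1) + β) (m n : ℤ) :
    lensDefect b α β n = lensDefect b α β m := by
  induction n using Int.inductionOn' (b := m) with
  | zero => rfl
  | succ k _ ih => rw [lensDefect_succ hrec, ih]
  | pred k _ ih => rw [← ih, ← lensDefect_succ hrec, sub_add_cancel]

lemma mul_lens_add_two (hrec : ∀ n : ℤ, b (n + 1) = α * b n - b (n - 1) + β) (n : ℤ) :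
    b n * b (n + 2) = b (n + 1) * (b (n + 1) - β) - lensDefect b α β n := by
  have e := hrec (n + 1)
  rw [add_sub_cancel_right, add_assoc, one_add_one_eq_two] at e
  unfold lensDefect
  linear_combination b n * e

end LensRecurrence

lemma four_term_of_mul_factorization {R : Type*} [CommRing R] [IsDomain R] {b f : ℤ → R}
    {β : R} (hfac : ∀ n : ℤ, b n = f (n - 1) * f n) (n : ℤ) (hf₁ : f (n + 1) ≠ 0)
    (hf₂ : f (n + 2) ≠ 0) (h : b (n + 1) * b (n + 3) = b (n + 2) * (b (n + 2) - β)) :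
    f (n + 3) * f n - f (n + 1) * f (n + 2) = -β := by
  rw [hfac, hfac, hfac, show n + 1 - 1 = n by ring, show n + 2 - 1 = n + 1 by ring,
    show n + 3 - 1 = n + 2 by ring] at h
  apply mul_right_cancel₀ (mul_ne_zero hf₁ hf₂)
  linear_combination h

theorem underground_quadratic_recurrence_general
    (b : ℤ → ℚ) (α β : ℚ)
    (hrec : ∀ n : ℤ, b (n + 1) = α * b n - b (n - 1) + β)
    (n₀ : ℤ)
    (hcomp : (b n₀) ^ 2 + (b (n₀ + 1)) ^ 2
      = α * b n₀ * b (n₀ + 1) + β * (b n₀ + b (n₀ + 1)))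
    (f : ℤ → ℚ) (hf : ∀ n : ℤ, f n ≠ 0)
    (hfac : ∀ n : ℤ, b n = f (n - 1) * f n) :
    ∀ n : ℤ, f (n + 3) * f n - f (n + 1) * f (n + 2) = -β := by
  have hdefect : ∀ n, lensDefect b α β n = 0 := fun n => by
    rw [lensDefect_eq hrec n₀, lensDefect, hcomp]
    ring
  intro n
  refine four_term_of_mul_factorization hfac n (hf _) (hf _) ?_
  have h := mul_lens_add_two hrec (n + 1)
  rwa [hdefect, sub_zero, add_assoc, show (1 : ℤ) + 2 = 3 by norm_num,
    show n + 1 + 1 = n + 2 by ring] at h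

/-- Any nowhere-vanishing factorization `f` of a lens sequence satisfies
the quadratic four-term recurrence `f (n+3) * f n - f (n+1) * f (n+2) = -β`. -/
theorem underground_quadratic_recurrence
    (b : ℤ → ℚ) (α β : ℚ) (hb : ∀ n : ℤ, b n ≠ 0)
    (hrec : ∀ n : ℤ, b (n + 1) = α * b n - b (n - 1) + β)
    (n₀ : ℤ)
    (hcomp : (b n₀) ^ 2 + (b (n₀ + 1)) ^ 2
      = α * b n₀ * b (n₀ + 1) + β * (b n₀ + b (n₀ + 1)))
    (f : ℤ → ℚ) (hf : ∀ n : ℤ, f n ≠ 0)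
    (hfac : ∀ n : ℤ, b n = f (n - 1) * f n) :
    ∀ n : ℤ, f (n + 3) * f n - f (n + 1) * f (n + 2) = -β :=
  underground_quadratic_recurrence_general b α β hrec n₀ hcomp f hf hfac
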